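/- arXiv:0811.2800 — 9 statements merged into one kernel-verified Lean document; each statement's English description precedes it below -/
import Mathlib

section
/- If σ and τ are chip configurations on K_n with σ(v) + τ(v) = 2n-1 for all vertices v, then for all t ≥ 0 and all v, U^t σ(v) + U^t τ(v) = 2n-1. -/
open Finset

/-- Number of unstable vertices of a chip configuration on `K n`. -/
def chipR (n : ℕ) (σ : Fin n → ℕ) : ℕ :=
  (Finset.univ.filter (fun v => n ≤ σ v)).card

/-- Parallel chip-firing update on the complete graph `K n`. -/
def chipU (n : ℕ) (σ : Fin n → ℕ) : Fin n → ℕ :=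
  fun v => if n ≤ σ v then σ v + chipR n σ - n else σ v + chipR n σ

/-- Total number of firings in the first `t` updates. -/
def chipAlpha (n : ℕ) (σ : Fin n → ℕ) (t : ℕ) : ℕ :=
  ∑ s ∈ Finset.range t, chipR n ((chipU n)^[s] σ)

/-- Number of times vertex `v` fires in the first `t` updates. -/
def odometer (n : ℕ) (σ : Fin n → ℕ) (t : ℕ) (v : Fin n) : ℕ :=
  ((Finset.range t).filter (fun s => n ≤ (chipU n)^[s] σ v)).card

/-- `a` is the activity of `σ`. -/
def Activity (n : ℕ) (σ : Fin n → ℕ) (a : ℝ) : Prop :=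
  Filter.Tendsto (fun t : ℕ => (chipAlpha n σ t : ℝ) / (n * t)) Filter.atTop (nhds a)

/-- A chip configuration is confined if all heights are at most `2n-1`
and the heights differ pairwise by at most `n-1`. -/
def Confined (n : ℕ) (σ : Fin n → ℕ) : Prop :=
  (∀ v, σ v ≤ 2 * n - 1) ∧ ∀ v w, σ v ≤ σ w + (n - 1)

/-- The eventual period: least `m ≥ 1` with `U^{t+m} σ = U^t σ` for all large `t`. -/
noncomputable def eventualPeriod (n : ℕ) (σ : Fin n → ℕ) : ℕ :=
  sInf {m | 1 ≤ m ∧ ∃ t₀, ∀ t ≥ t₀, (chipU n)^[t + m] σ = (chipU n)^[t] σ}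

/-- The transient length of the dynamics started at `σ`. -/
noncomputable def transientLength (n : ℕ) (σ : Fin n → ℕ) : ℕ :=
  sInf {t | ∃ t' > t, (chipU n)^[t'] σ = (chipU n)^[t] σ}

lemma chipR_add (n : ℕ) (hn : 0 < n) (σ τ : Fin n → ℕ)
    (h : ∀ v, σ v + τ v = 2 * n - 1) : chipR n σ + chipR n τ = n := by
  have key : ∀ v : Fin n, n ≤ τ v ↔ ¬ n ≤ σ v := by
    intro v; have := h v; omega
  unfold chipR
  have : Finset.univ.filter (fun v => n ≤ τ v)
      = Finset.univ.filter (fun v => ¬ n ≤ σ v) := by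
    apply Finset.filter_congr; intro v _; simp [key v]
  rw [this, Finset.card_filter_add_card_filter_not]
  simp

lemma chip_step (n : ℕ) (hn : 0 < n) (σ τ : Fin n → ℕ)
    (h : ∀ v, σ v + τ v = 2 * n - 1) (v : Fin n) :
    chipU n σ v + chipU n τ v = 2 * n - 1 := by
  have hr := chipR_add n hn σ τ h
  have hv := h v
  unfold chipU
  by_cases hs : n ≤ σ v
  · have ht : ¬ n ≤ τ v := by omega
    simp only [if_pos hs, if_neg ht]; omega
  · have ht : n ≤ τ v := by omega
    simp only [if_neg hs, if_pos ht]; omega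

theorem reflection_invariance (n : ℕ) (hn : 0 < n) (σ τ : Fin n → ℕ)
    (h : ∀ v, σ v + τ v = 2 * n - 1) :
    ∀ (t : ℕ) (v : Fin n), (chipU n)^[t] σ v + (chipU n)^[t] τ v = 2 * n - 1 := by
  intro t
  induction t with
  | zero => simpa using h
  | succ t ih =>
    intro v
    rw [Function.iterate_succ_apply', Function.iterate_succ_apply']
    exact chip_step n hn _ _ ih v
end

section
/- If σ is a confined chip configuration on K_n and σ(v) ≤ σ(w), then for all t ≥ 0, u_t(σ,v) ≤ u_t(σ,w) ≤ u_t(σ,v) + 1. -/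
open Finset

lemma chipU_diff (n : ℕ) (σ : Fin n → ℕ) (h : ∀ v w, σ v ≤ σ w + (n - 1)) :
    ∀ v w, chipU n σ v ≤ chipU n σ w + (n - 1) := by
  intro v w
  have hvw := h v w
  have hwv := h w v
  unfold chipU
  by_cases hv : n ≤ σ v <;> by_cases hw : n ≤ σ w <;> simp [hv, hw] <;> omega

lemma iter_diff (n : ℕ) (σ : Fin n → ℕ) (h : ∀ v w, σ v ≤ σ w + (n - 1)) :
    ∀ t v w, (chipU n)^[t] σ v ≤ (chipU n)^[t] σ w + (n - 1) := by
  intro t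
  induction t with
  | zero => exact h
  | succ t ih =>
    intro v w
    rw [Function.iterate_succ_apply']
    exact chipU_diff n _ ih v w

lemma odometer_succ (n : ℕ) (σ : Fin n → ℕ) (t : ℕ) (v : Fin n) :
    odometer n σ (t + 1) v =
      odometer n σ t v + (if n ≤ (chipU n)^[t] σ v then 1 else 0) := by
  unfold odometer
  rw [Finset.range_add_one, Finset.filter_insert]
  split
  · rw [Finset.card_insert_of_notMem (by simp)]
  · simp

lemma height_id (n : ℕ) (σ : Fin n → ℕ) :
    ∀ t v, (chipU n)^[t] σ v + n * odometer n σ t v = σ v + chipAlpha n σ t := by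
  intro t
  induction t with
  | zero => simp [odometer, chipAlpha]
  | succ t ih =>
    intro v
    have hA : chipAlpha n σ (t + 1) = chipAlpha n σ t + chipR n ((chipU n)^[t] σ) := by
      unfold chipAlpha; rw [Finset.sum_range_succ]
    rw [Function.iterate_succ_apply', hA, odometer_succ]
    have hiv := ih v
    have hU : chipU n ((chipU n)^[t] σ) v =
        if n ≤ (chipU n)^[t] σ v then (chipU n)^[t] σ v + chipR n ((chipU n)^[t] σ) - n
        else (chipU n)^[t] σ v + chipR n ((chipU n)^[t] σ) := rfl
    rw [hU]
    by_cases hf : n ≤ (chipU n)^[t] σ v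
    · simp only [hf, if_true, Nat.mul_add, Nat.mul_one]
      omega
    · simp only [hf, if_false, Nat.mul_add, Nat.mul_zero]
      omega

theorem odometer_interlacing (n : ℕ) (hn : 0 < n) (σ : Fin n → ℕ)
    (hconf : Confined n σ) (v w : Fin n) (hvw : σ v ≤ σ w) :
    ∀ t : ℕ, odometer n σ t v ≤ odometer n σ t w ∧
      odometer n σ t w ≤ odometer n σ t v + 1 := by
  intro t
  have h1 := height_id n σ t v
  have h2 := height_id n σ t w
  have hd1 := iter_diff n σ hconf.2 t v w
  have hd2 := iter_diff n σ hconf.2 t w v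
  have hvw2 := hconf.2 w v
  constructor
  · by_contra hc
    push_neg at hc
    have : odometer n σ t w + 1 ≤ odometer n σ t v := hc
    have hm : n * (odometer n σ t w + 1) ≤ n * odometer n σ t v :=
      Nat.mul_le_mul_left n this
    rw [Nat.mul_add, Nat.mul_one] at hm
    omega
  · by_contra hc
    push_neg at hc
    have : odometer n σ t v + 2 ≤ odometer n σ t w := hc
    have hm : n * (odometer n σ t v + 2) ≤ n * odometer n σ t w :=
      Nat.mul_le_mul_left n this
    rw [Nat.mul_add] at hm
    omega
end

section
/- Every confined chip configuration σ on K_n is eventually periodic with period at most n: there exist times 0 ≤ s < t ≤ n with U^s σ = U^t σ. -/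
open Finset

lemma chipAlpha_succ (n : ℕ) (σ : Fin n → ℕ) (t : ℕ) :
    chipAlpha n σ (t + 1) = chipAlpha n σ t + chipR n ((chipU n)^[t] σ) := by
  simp [chipAlpha, Finset.sum_range_succ]

lemma chip_formula (n : ℕ) (σ : Fin n → ℕ) (t : ℕ) (v : Fin n) :
    (chipU n)^[t] σ v + n * odometer n σ t v = σ v + chipAlpha n σ t := by
  induction t with
  | zero => simp [odometer, chipAlpha]
  | succ t ih =>
    rw [Function.iterate_succ_apply', odometer_succ, chipAlpha_succ]
    simp only [chipU, mul_add]
    split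
    · rename_i h
      simp only [mul_one]
      generalize hM : n * odometer n σ t v = M at ih ⊢
      omega
    · simp only [mul_zero]
      generalize hM : n * odometer n σ t v = M at ih ⊢
      omega

lemma odometer_cases (n : ℕ) (σ : Fin n → ℕ) (hconf : Confined n σ)
    (v w : Fin n) (hvw : σ w ≤ σ v) (t : ℕ) :
    (odometer n σ t v = odometer n σ t w ∧
      (chipU n)^[t] σ v + σ w = (chipU n)^[t] σ w + σ v) ∨
    (odometer n σ t v = odometer n σ t w + 1 ∧
      (chipU n)^[t] σ w + σ v = (chipU n)^[t] σ v + σ w + n) := by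
  have hd : σ v ≤ σ w + (n - 1) := hconf.2 v w
  have hn : 0 < n := v.pos
  induction t with
  | zero => left; simp [odometer, Nat.add_comm]
  | succ t ih =>
    rw [odometer_succ, odometer_succ]
    simp only [Function.iterate_succ_apply']
    simp only [chipU]
    rcases ih with ⟨e1, e2⟩ | ⟨e1, e2⟩ <;> split_ifs with h1 h2 h2 <;> omega

lemma odometer_pair (n : ℕ) (σ : Fin n → ℕ) (hconf : Confined n σ)
    (v w : Fin n) (s t : ℕ) :
    odometer n σ t v + odometer n σ s w ≤ odometer n σ t w + odometer n σ s v + 1 := by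
  rcases le_total (σ w) (σ v) with h | h
  · have h1 := odometer_cases n σ hconf v w h t
    have h2 := odometer_cases n σ hconf v w h s
    omega
  · have h1 := odometer_cases n σ hconf w v h t
    have h2 := odometer_cases n σ hconf w v h s
    omega

lemma sum_odometer (n : ℕ) (σ : Fin n → ℕ) (t : ℕ) :
    ∑ v, odometer n σ t v = chipAlpha n σ t := by
  unfold odometer chipAlpha chipR
  simp only [Finset.card_filter]
  rw [Finset.sum_comm]

lemma chipAlpha_mono (n : ℕ) (σ : Fin n → ℕ) {s t : ℕ} (h : s ≤ t) :
    chipAlpha n σ s ≤ chipAlpha n σ t :=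
  Finset.sum_le_sum_of_subset (Finset.range_subset_range.2 h)

theorem confined_period_at_most_n (n : ℕ) (hn : 0 < n) (σ : Fin n → ℕ)
    (hconf : Confined n σ) :
    ∃ s t : ℕ, s < t ∧ t ≤ n ∧ (chipU n)^[s] σ = (chipU n)^[t] σ := by
  -- pigeonhole on `chipAlpha mod n` among times `0, 1, ..., n`
  obtain ⟨a, ha, b, hb, hab, habeq⟩ :=
    Finset.exists_ne_map_eq_of_card_lt_of_maps_to
      (s := Finset.range (n + 1)) (t := Finset.range n)
      (by simp) (f := fun x => chipAlpha n σ x % n)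
      (fun x _ => Finset.mem_range.2 (Nat.mod_lt _ hn))
  obtain ⟨s, t, hst, htn, hmod⟩ :
      ∃ s t, s < t ∧ t ≤ n ∧ chipAlpha n σ s % n = chipAlpha n σ t % n := by
    rcases lt_or_gt_of_ne hab with h | h
    · exact ⟨a, b, h, Nat.lt_succ_iff.1 (Finset.mem_range.1 hb), habeq⟩
    · exact ⟨b, a, h, Nat.lt_succ_iff.1 (Finset.mem_range.1 ha), habeq.symm⟩
  have hle : chipAlpha n σ s ≤ chipAlpha n σ t := chipAlpha_mono n σ hst.le
  obtain ⟨k, hk⟩ : ∃ k, chipAlpha n σ t = chipAlpha n σ s + n * k := by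
    obtain ⟨k, hk'⟩ := (Nat.modEq_iff_dvd' hle).1 hmod
    exact ⟨k, by omega⟩
  have hpair := fun v w => odometer_pair n σ hconf v w s t
  have hkey : ∀ v, odometer n σ t v = odometer n σ s v + k := by
    intro v
    by_contra hne
    rcases Nat.lt_or_ge (odometer n σ t v) (odometer n σ s v + k) with hlt | hge
    · have hall : ∀ w, odometer n σ t w ≤ odometer n σ s w + k := by
        intro w; have := hpair w v; omega
      have hsum : ∑ w, odometer n σ t w < ∑ w, (odometer n σ s w + k) :=
        Finset.sum_lt_sum (fun w _ => hall w) ⟨v, Finset.mem_univ v, by omega⟩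
      rw [sum_odometer, Finset.sum_add_distrib, sum_odometer, Finset.sum_const,
        Finset.card_univ, Fintype.card_fin, smul_eq_mul] at hsum
      rw [hk] at hsum
      exact absurd hsum (by simp [Nat.mul_comm])
    · have hall : ∀ w, odometer n σ s w + k ≤ odometer n σ t w := by
        intro w; have := hpair v w; omega
      have hsum : ∑ w, (odometer n σ s w + k) < ∑ w, odometer n σ t w :=
        Finset.sum_lt_sum (fun w _ => hall w) ⟨v, Finset.mem_univ v, by omega⟩
      rw [sum_odometer, Finset.sum_add_distrib, sum_odometer, Finset.sum_const,
        Finset.card_univ, Fintype.card_fin, smul_eq_mul] at hsum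
      rw [hk] at hsum
      exact absurd hsum (by simp [Nat.mul_comm])
  refine ⟨s, t, hst, htn, funext fun v => ?_⟩
  have Ft := chip_formula n σ t v
  have Fs := chip_formula n σ s v
  rw [hkey v, Nat.mul_add, hk] at Ft
  generalize hA : n * odometer n σ s v = A at Ft Fs
  generalize hB : n * k = B at Ft
  omega
end

section
/- For any chip configuration σ on K_n, the eventual period m(σ) of the parallel chip-firing dynamics satisfies m(σ) ≤ ν(σ), where ν(σ) = #{σ(v) : v ∈ [n]} is the number of distinct chip heights in σ. -/
open Finset

/-!
Chips are conserved, so every trajectory is eventually periodic, and the number of distinct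
heights never increases along it; it therefore suffices to bound the minimal period `p` of a
periodic configuration `τ` by its number of distinct heights. If `τ` is not a fixed point, then on
its cycle fewer than `n` vertices fire at each step, so heights stay below `2n - 1` and every
configuration of the cycle is confined. Heights change by a common amount modulo `n`, so, the chip
count being fixed, a confined configuration of the cycle is determined by the original height
`τ u` of any of its minimal vertices `u`. The `p` distinct configurations of the cycle thus exhibit `p` distinct heights of `τ`.
-/

open Function

namespace Function

variable {α : Type*} {f : α → α} {x : α}

theorem iterate_mem_periodicPts (hx : x ∈ periodicPts f) (k : ℕ) : f^[k] x ∈ periodicPts f := by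
  obtain ⟨p, hp, hxp⟩ := mem_periodicPts.mp hx
  exact mk_mem_periodicPts hp (hxp.apply_iterate k)

theorem not_isFixedPt_iterate (hx : x ∈ periodicPts f) (hfix : ¬IsFixedPt f x) (k : ℕ) :
    ¬IsFixedPt f (f^[k] x) := by
  rwa [← minimalPeriod_eq_one_iff_isFixedPt, minimalPeriod_apply_iterate hx,
    minimalPeriod_eq_one_iff_isFixedPt]

theorem IsPeriodicPt.le_apply_of_antitone {β : Type*} [Preorder β] {φ : α → β} {p : ℕ}
    (hx : IsPeriodicPt f p x) (hp : 0 < p) (hφ : ∀ k, φ (f^[k + 1] x) ≤ φ (f^[k] x)) :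
    φ x ≤ φ (f x) := by
  have h : ∀ k, φ (f^[k + 1] x) ≤ φ (f x) := by
    intro k
    induction k with
    | zero => rfl
    | succ k ih => exact (hφ (k + 1)).trans ih
  simpa [Nat.sub_add_cancel hp, hx.eq] using h (p - 1)

theorem exists_iterate_mem_periodicPts {s : Set α} (hs : s.Finite) (hx : ∀ k, f^[k] x ∈ s) :
    ∃ a, f^[a] x ∈ periodicPts f := by
  obtain ⟨a, b, hab, hfab⟩ := hs.exists_lt_map_eq_of_forall_mem hx
  refine ⟨a, mk_mem_periodicPts (Nat.sub_pos_of_lt hab) ?_⟩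
  rw [IsPeriodicPt, IsFixedPt, ← iterate_add_apply, Nat.sub_add_cancel hab.le, hfab]

end Function

section Chip

variable {n : ℕ}

theorem chipR_le (σ : Fin n → ℕ) : chipR n σ ≤ n := by
  simpa [chipR] using card_filter_le univ fun v => n ≤ σ v

theorem chipR_lt_of_not_isFixedPt {σ : Fin n → ℕ} (h : ¬IsFixedPt (chipU n) σ) :
    chipR n σ < n := by
  refine (chipR_le σ).lt_of_ne fun hr => h ?_
  have hall : ∀ v, n ≤ σ v := by
    have hcard : #(univ.filter fun v => n ≤ σ v) = #(univ : Finset (Fin n)) := by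
      simpa [chipR] using hr
    exact fun v => card_filter_eq_iff.mp hcard v (mem_univ v)
  funext v
  simp only [chipU, if_pos (hall v), hr, Nat.add_sub_cancel]

theorem chipU_lt_self {σ : Fin n → ℕ} (hr : chipR n σ < n) {v : Fin n} (hv : n ≤ σ v) :
    chipU n σ v < σ v := by
  simp only [chipU, if_pos hv]
  omega

theorem max_chipU_le {σ : Fin n → ℕ} (hr : chipR n σ < n) (v : Fin n) :
    max (chipU n σ v) (2 * n - 2) ≤ max (σ v) (2 * n - 2) := by
  unfold chipU
  split <;> omega

theorem confined_chipU {σ : Fin n → ℕ} (hr : chipR n σ < n) (hσ : ∀ v, σ v ≤ 2 * n - 2) :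
    Confined n (chipU n σ) := by
  have window : ∀ v, chipR n σ ≤ chipU n σ v ∧ chipU n σ v ≤ chipR n σ + (n - 1) := by
    intro v
    have := hσ v
    unfold chipU
    split <;> omega
  exact ⟨fun v => by have := window v; omega,
    fun v w => by have := window v; have := window w; omega⟩

theorem sum_chipU (σ : Fin n → ℕ) : ∑ v, chipU n σ v = ∑ v, σ v := by
  have hstep : ∀ v, chipU n σ v + n * (if n ≤ σ v then 1 else 0) = σ v + chipR n σ := by
    intro v
    unfold chipU
    split <;> omega
  have h := sum_congr rfl fun v (_ : v ∈ univ) => hstep v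
  rw [sum_add_distrib, sum_add_distrib, ← mul_sum, ← card_filter, sum_const, card_univ,
    Fintype.card_fin, smul_eq_mul, ← chipR, mul_comm] at h
  omega

theorem sum_iterate_chipU (σ : Fin n → ℕ) (t : ℕ) : ∑ v, (chipU n)^[t] σ v = ∑ v, σ v := by
  induction t with
  | zero => rfl
  | succ t ih => rw [iterate_succ_apply', sum_chipU, ih]

theorem cast_chipU (σ : Fin n → ℕ) (v : Fin n) :
    (chipU n σ v : ZMod n) = σ v + chipR n σ := by
  unfold chipU
  split
  · rw [Nat.cast_sub (by omega)]
    simp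
  · push_cast; rfl

theorem cast_iterate_chipU (σ : Fin n → ℕ) (t : ℕ) (v : Fin n) :
    ((chipU n)^[t] σ v : ZMod n) = σ v + chipAlpha n σ t := by
  induction t with
  | zero => simp [chipAlpha]
  | succ t ih =>
    rw [iterate_succ_apply', cast_chipU, ih]
    simp only [chipAlpha, sum_range_succ]
    push_cast
    ring

theorem card_image_chipU_le (σ : Fin n → ℕ) : #(univ.image (chipU n σ)) ≤ #(univ.image σ) := by
  have h : chipU n σ = (fun y => if n ≤ y then y + chipR n σ - n else y + chipR n σ) ∘ σ := rfl
  rw [h, ← image_image]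
  exact card_image_le

theorem card_image_iterate_chipU_le (σ : Fin n → ℕ) (t : ℕ) :
    #(univ.image ((chipU n)^[t] σ)) ≤ #(univ.image σ) := by
  induction t with
  | zero => rfl
  | succ t ih =>
    rw [iterate_succ_apply']
    exact (card_image_chipU_le _).trans ih

theorem le_of_mem_periodicPts_chipU {τ : Fin n → ℕ} (hτ : τ ∈ periodicPts (chipU n))
    (hfix : ¬IsFixedPt (chipU n) τ) (v : Fin n) : τ v ≤ 2 * n - 2 := by
  -- `max (τ v) (2n - 2)` never increases along the cycle, and it drops if `τ v ≥ 2n - 1`.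
  have hr k := chipR_lt_of_not_isFixedPt (not_isFixedPt_iterate hτ hfix k)
  obtain ⟨p, hp, hτp⟩ := mem_periodicPts.mp hτ
  have hle := hτp.le_apply_of_antitone hp (φ := fun σ => max (σ v) (2 * n - 2)) fun k => by
    simpa only [iterate_succ_apply'] using max_chipU_le (hr k) v
  by_contra! hv
  have := chipU_lt_self (chipR_lt_of_not_isFixedPt hfix) (v := v) (by omega)
  omega

theorem confined_of_mem_periodicPts_chipU {τ : Fin n → ℕ} (hτ : τ ∈ periodicPts (chipU n))
    (hfix : ¬IsFixedPt (chipU n) τ) : Confined n τ := by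
  set p := minimalPeriod (chipU n) τ
  have hp : 0 < p := minimalPeriod_pos_of_mem_periodicPts hτ
  have hprev : chipU n ((chipU n)^[p - 1] τ) = τ := by
    rw [← iterate_succ_apply' (chipU n), Nat.succ_eq_add_one, Nat.sub_add_cancel hp,
      iterate_minimalPeriod]
  rw [← hprev]
  exact confined_chipU (chipR_lt_of_not_isFixedPt (not_isFixedPt_iterate hτ hfix _))
    (le_of_mem_periodicPts_chipU (iterate_mem_periodicPts hτ _) (not_isFixedPt_iterate hτ hfix _))

theorem eq_of_confined_of_cast_sub_eq {x y : Fin n → ℕ} {u u' : Fin n}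
    (hx : Confined n x) (hy : Confined n y) (hxu : ∀ v, x u ≤ x v) (hyu : ∀ v, y u' ≤ y v)
    (hsum : ∑ v, x v = ∑ v, y v) (hcast : ∀ v, (x v : ZMod n) - x u = y v - y u') : x = y := by
  have hn : 0 < n := u.pos
  have hgap : ∀ v, x v + y u' = y v + x u := by
    intro v
    have h := hcast v
    rw [← Nat.cast_sub (hxu v), ← Nat.cast_sub (hyu v), ZMod.natCast_eq_natCast_iff',
      Nat.mod_eq_of_lt (by have := hx.2 v u; omega),
      Nat.mod_eq_of_lt (by have := hy.2 v u'; omega)] at h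
    have := hxu v
    have := hyu v
    omega
  have hsum' := sum_congr rfl fun v (_ : v ∈ univ) => hgap v
  rw [sum_add_distrib, sum_add_distrib, sum_const, sum_const, card_univ, Fintype.card_fin,
    smul_eq_mul, smul_eq_mul, hsum] at hsum'
  have hmin : y u' = x u := Nat.eq_of_mul_eq_mul_left hn (by omega)
  funext v
  have := hgap v
  omega

theorem minimalPeriod_chipU_le_card_image (hn : 0 < n) {τ : Fin n → ℕ}
    (hτ : τ ∈ periodicPts (chipU n)) : minimalPeriod (chipU n) τ ≤ #(univ.image τ) := by
  have : Nonempty (Fin n) := ⟨⟨0, hn⟩⟩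
  by_cases hfix : IsFixedPt (chipU n) τ
  · rw [minimalPeriod_eq_one_iff_isFixedPt.mpr hfix]
    exact card_pos.mpr (univ_nonempty.image τ)
  choose u hu using fun k => Finite.exists_min ((chipU n)^[k] τ)
  have hconf k := confined_of_mem_periodicPts_chipU (iterate_mem_periodicPts hτ k)
    (not_isFixedPt_iterate hτ hfix k)
  have hinj : Set.InjOn (fun k => τ (u k)) (range (minimalPeriod (chipU n) τ)) := by
    intro a ha b hb hab
    refine iterate_injOn_Iio_minimalPeriod (by simpa using ha) (by simpa using hb) ?_
    refine eq_of_confined_of_cast_sub_eq (hconf a) (hconf b) (hu a) (hu b)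
      (by rw [sum_iterate_chipU, sum_iterate_chipU]) fun v => ?_
    simp only [cast_iterate_chipU, add_sub_add_right_eq_sub, hab]
  simpa using card_le_card_of_injOn _ (fun k _ => mem_image_of_mem τ (mem_univ (u k))) hinj

theorem exists_iterate_chipU_mem_periodicPts (σ : Fin n → ℕ) :
    ∃ a, (chipU n)^[a] σ ∈ periodicPts (chipU n) := by
  refine exists_iterate_mem_periodicPts (Set.finite_Iic fun _ => ∑ v, σ v) fun t v => ?_
  rw [← sum_iterate_chipU σ t]
  exact single_le_sum (fun _ _ => Nat.zero_le _) (mem_univ v)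

theorem eventualPeriod_le_minimalPeriod {σ : Fin n → ℕ} {a : ℕ}
    (ha : (chipU n)^[a] σ ∈ periodicPts (chipU n)) :
    eventualPeriod n σ ≤ minimalPeriod (chipU n) ((chipU n)^[a] σ) := by
  refine Nat.sInf_le ⟨minimalPeriod_pos_of_mem_periodicPts ha, a, fun t ht => ?_⟩
  obtain ⟨s, rfl⟩ := Nat.exists_eq_add_of_le' ht
  rw [add_right_comm, iterate_add_apply, iterate_add_minimalPeriod_eq, ← iterate_add_apply]

end Chip

theorem period_le_distinct_heights (n : ℕ) (hn : 0 < n) (σ : Fin n → ℕ) :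
    eventualPeriod n σ ≤ (Finset.univ.image σ).card := by
  obtain ⟨a, ha⟩ := exists_iterate_chipU_mem_periodicPts σ
  calc eventualPeriod n σ ≤ minimalPeriod (chipU n) ((chipU n)^[a] σ) :=
        eventualPeriod_le_minimalPeriod ha
    _ ≤ #(univ.image ((chipU n)^[a] σ)) := minimalPeriod_chipU_le_card_image hn ha
    _ ≤ #(univ.image σ) := card_image_iterate_chipU_le σ a
end

section
/- If σ is a chip configuration on K_n such that every vertex fires at least once in the first two updates (u_2(σ,v) ≥ 1 for all v), then u_{2t}(σ,v) ≥ t for all v and all t ≥ 1. -/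
open Finset

lemma chip_cover (n : ℕ) (σ : Fin n → ℕ)
    (hP : ∀ v, n ≤ σ v ∨ n ≤ chipU n σ v) :
    n ≤ chipR n σ + chipR n (chipU n σ) := by
  have hsub : (univ : Finset (Fin n)) ⊆
      (univ.filter (fun v => n ≤ σ v)) ∪ (univ.filter (fun v => n ≤ chipU n σ v)) := by
    intro v _
    rcases hP v with h | h
    · exact mem_union_left _ (mem_filter.mpr ⟨mem_univ v, h⟩)
    · exact mem_union_right _ (mem_filter.mpr ⟨mem_univ v, h⟩)
  calc n = (univ : Finset (Fin n)).card := (Finset.card_fin n).symm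
    _ ≤ _ := card_le_card hsub
    _ ≤ _ := card_union_le _ _

lemma chip_step_s10 (n : ℕ) (σ : Fin n → ℕ)
    (hP : ∀ v, n ≤ σ v ∨ n ≤ chipU n σ v) :
    ∀ v, n ≤ chipU n σ v ∨ n ≤ chipU n (chipU n σ) v := by
  intro v
  by_cases h1 : n ≤ chipU n σ v
  · exact Or.inl h1
  · right
    have hσv : n ≤ σ v := by
      rcases hP v with h | h
      · exact h
      · exact absurd h h1
    have key := chip_cover n σ hP
    have hU : chipU n σ v = σ v + chipR n σ - n := if_pos hσv
    have hUU : chipU n (chipU n σ) v = chipU n σ v + chipR n (chipU n σ) := if_neg h1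
    omega

theorem fires_every_two_steps (n : ℕ) (hn : 0 < n) (σ : Fin n → ℕ)
    (h : ∀ v : Fin n, 1 ≤ odometer n σ 2 v) :
    ∀ t : ℕ, 1 ≤ t → ∀ v : Fin n, t ≤ odometer n σ (2 * t) v := by
  have hP0 : ∀ v, n ≤ σ v ∨ n ≤ chipU n σ v := by
    intro v
    by_contra hc
    push_neg at hc
    have h0 : odometer n σ 2 v = 0 := by
      unfold odometer
      rw [Finset.card_eq_zero, Finset.filter_eq_empty_iff]
      intro s hs
      simp only [Finset.mem_range] at hs
      interval_cases s <;> simp <;> omega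
    have := h v
    omega
  have hPs : ∀ s, ∀ v, n ≤ (chipU n)^[s] σ v ∨ n ≤ chipU n ((chipU n)^[s] σ) v := by
    intro s
    induction s with
    | zero => simpa using hP0
    | succ k ih =>
      rw [Function.iterate_succ_apply']
      exact chip_step_s10 n _ ih
  intro t ht v
  have key : ∀ k, n ≤ ((chipU n)^[2 * k] σ) v ∨ n ≤ ((chipU n)^[2 * k + 1] σ) v := by
    intro k
    rcases hPs (2 * k) v with h | h
    · exact Or.inl h
    · right
      rw [Function.iterate_succ_apply']
      exact h
  classical
  set f : ℕ → ℕ := fun k => if n ≤ ((chipU n)^[2 * k] σ) v then 2 * k else 2 * k + 1 with hf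
  have hmaps : ∀ k ∈ Finset.range t,
      f k ∈ (Finset.range (2 * t)).filter (fun s => n ≤ (chipU n)^[s] σ v) := by
    intro k hk
    simp only [Finset.mem_range] at hk
    simp only [hf, Finset.mem_filter, Finset.mem_range]
    split_ifs with hc
    · exact ⟨by omega, hc⟩
    · exact ⟨by omega, (key k).resolve_left hc⟩
  have hinj : Set.InjOn f (Finset.range t) := by
    intro a _ b _ hab
    simp only [hf] at hab
    split_ifs at hab <;> omega
  calc t = (Finset.range t).card := (Finset.card_range t).symm
    _ ≤ _ := Finset.card_le_card_of_injOn f hmaps hinj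
end

section
/- Let 1 ≤ p < q ≤ n with gcd(p,q) = 1 and p/q ≤ 1/2. The chip configuration σ on K_n defined by σ(v) = v+p-1 for v ≤ q-1-p, σ(v) = v+n+p-q-1 for q-p ≤ v ≤ q-1, and σ(v) = n+p-1 for v ≥ q, has activity a(σ) = p/q. -/
/-!
Write `α t` for the number of firings in the first `t` steps and `d t = -p t mod q`.
A configuration whose heights lie in a window `[m, m + n)` is mapped by `U` to one whose heights
lie in `[r, r + n)`, `r` being the number of vertices that fire, and its heights mod `n` all go up
by `r`. For the explicit `σ` this shows that `U^t σ` has heights `σ - d t` mod `n`, and that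
`p + n - q` vertices fire at time `t` when `d t < p`, and `p` otherwise. Since `d` then moves by
`q - p` and by `-p` respectively, `q α t = n p t + (n - q) d t` with `0 ≤ d t < q`, so
`α t / (n t) → p / q`.
-/

open Finset

open Filter Topology

/-- For `m ≤ n`, the representative of `x` modulo `n` in `[m, m + n)`. -/
def reprIco (n m x : ℕ) : ℕ := x % n + if x % n < m then n else 0

section ReprIco

variable {n m x : ℕ}

lemma le_reprIco_iff (hn : 0 < n) : n ≤ reprIco n m x ↔ x % n < m := by
  have := Nat.mod_lt x hn
  unfold reprIco
  split_ifs <;> omega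

lemma reprIco_add (hn : 0 < n) (hm : m ≤ n) : reprIco n m (x + m) = x % n + m := by
  have hx := Nat.mod_lt x hn
  have hmod : (x + m) % n = (x % n + m) % n := (Nat.mod_add_mod x n m).symm
  unfold reprIco
  rcases lt_or_ge (x % n + m) n with h | h
  · rw [hmod, Nat.mod_eq_of_lt h]
    split_ifs <;> omega
  · rw [hmod, Nat.mod_eq_sub_mod h, Nat.mod_eq_of_lt (by omega)]
    split_ifs <;> omega

lemma reprIco_congr {y : ℕ} (h : x % n = y % n) : reprIco n m x = reprIco n m y := by
  unfold reprIco; rw [h]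

lemma reprIco_of_le_of_lt (hm : m ≤ n) (h : m ≤ x) (h' : x < m + n) : reprIco n m x = x := by
  unfold reprIco
  rcases lt_or_ge x n with hx | hx
  · rw [Nat.mod_eq_of_lt hx]
    split_ifs <;> omega
  · rw [Nat.mod_eq_sub_mod hx, Nat.mod_eq_of_lt (by omega)]
    split_ifs <;> omega

end ReprIco

lemma card_filter_val_mem {n : ℕ} {s : Finset ℕ} (h : s ⊆ range n) :
    #{v : Fin n | (v : ℕ) ∈ s} = #s := by
  rw [← card_attachFin s fun m hm => mem_range.1 (h hm)]
  congr 1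
  ext v
  simp only [mem_filter, mem_univ, true_and, mem_attachFin]

section Window

variable {n m : ℕ}

lemma chipR_reprIco (hn : 0 < n) (c : Fin n → ℕ) :
    chipR n (fun v => reprIco n m (c v)) = #{v | c v % n < m} := by
  simp only [chipR, le_reprIco_iff hn]

lemma chipU_reprIco {r : ℕ} (hn : 0 < n) (c : Fin n → ℕ)
    (hr : chipR n (fun v => reprIco n m (c v)) = r) :
    chipU n (fun v => reprIco n m (c v)) = fun v => reprIco n r (c v + r) := by
  have hrn : r ≤ n := hr ▸ (card_filter_le _ _).trans_eq (card_fin n)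
  funext v
  have hc := Nat.mod_lt (c v) hn
  rw [reprIco_add hn hrn]
  simp only [chipU, hr]
  unfold reprIco
  split_ifs <;> omega

end Window

def explicitConfig (n p q : ℕ) (v : Fin n) : ℕ :=
  if (v : ℕ) + 1 ≤ q - 1 - p then (v : ℕ) + 1 + p - 1
  else if (v : ℕ) + 1 ≤ q - 1 then (v : ℕ) + 1 + n + p - q - 1
  else n + p - 1

def rotate (p q d : ℕ) : ℕ := if d < p then d + (q - p) else d - p

/-- `phase p q t = -p t mod q`. -/
def phase (p q t : ℕ) : ℕ := (rotate p q)^[t] 0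

def firingCount (n p q d : ℕ) : ℕ := if d < p then p + (n - q) else p

def prevFiringCount (n p q d : ℕ) : ℕ := if q - p ≤ d then p + (n - q) else p

def firingSet (n p q d : ℕ) : Finset ℕ :=
  if d < p then range n \ Ico d (d + (q - p)) else Ico (d - p) d

def phaseConfig (n p q d : ℕ) : Fin n → ℕ :=
  fun v => reprIco n (prevFiringCount n p q d) (explicitConfig n p q v + (n - d))

section Explicit

variable {n p q : ℕ}

lemma phase_succ (t : ℕ) : phase p q (t + 1) = rotate p q (phase p q t) :=
  Function.iterate_succ_apply' _ _ _

lemma phase_lt (hpq : p < q) (t : ℕ) : phase p q t < q := by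
  induction t with
  | zero => simp only [phase, Function.iterate_zero_apply]; omega
  | succ t ih =>
    rw [phase_succ, rotate]
    split_ifs <;> omega

lemma card_firingSet (hpq : p ≤ q) (hqn : q ≤ n) (d : ℕ) :
    #(firingSet n p q d) = firingCount n p q d := by
  unfold firingSet firingCount
  split_ifs with h
  · rw [card_sdiff_of_subset (fun j hj => by simp only [mem_Ico, mem_range] at hj ⊢; omega),
      Nat.card_Ico, card_range]
    omega
  · rw [Nat.card_Ico]
    omega

lemma firingSet_subset_range (hqn : q ≤ n) {d : ℕ} (hd : d < q) :
    firingSet n p q d ⊆ range n := by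
  unfold firingSet
  split_ifs
  · exact sdiff_subset
  · intro j hj
    simp only [mem_Ico, mem_range] at hj ⊢
    omega

lemma explicitConfig_mod_lt_iff (hpq : p < q) (hqn : q ≤ n) (hhalf : 2 * p ≤ q) {d : ℕ}
    (hd : d < q) (v : Fin n) :
    (explicitConfig n p q v + (n - d)) % n < prevFiringCount n p q d ↔
      (v : ℕ) ∈ firingSet n p q d := by
  have hv := v.isLt
  have hlt : explicitConfig n p q v + (n - d) < n * 3 := by
    unfold explicitConfig; split_ifs <;> omega
  generalize hx : explicitConfig n p q v + (n - d) = x at hlt ⊢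
  have hdiv := Nat.div_add_mod x n
  have hmod : x % n < n := Nat.mod_lt x (by omega)
  have hk : x / n < 3 := Nat.div_lt_of_lt_mul hlt
  obtain hk | hk | hk : x / n = 0 ∨ x / n = 1 ∨ x / n = 2 := by
    generalize x / n = k at hk; omega
  all_goals
    rw [hk] at hdiv
    unfold prevFiringCount firingSet explicitConfig at *
    split_ifs at * <;> simp only [Finset.mem_sdiff, mem_range, mem_Ico] <;> omega

lemma chipR_phaseConfig (hpq : p < q) (hqn : q ≤ n) (hhalf : 2 * p ≤ q) {d : ℕ} (hd : d < q) :
    chipR n (phaseConfig n p q d) = firingCount n p q d := by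
  unfold phaseConfig
  rw [chipR_reprIco (by omega)]
  simp only [explicitConfig_mod_lt_iff hpq hqn hhalf hd]
  rw [card_filter_val_mem (firingSet_subset_range hqn hd), card_firingSet hpq.le hqn]

lemma prevFiringCount_rotate {d : ℕ} (hd : d < q) :
    prevFiringCount n p q (rotate p q d) = firingCount n p q d := by
  unfold prevFiringCount firingCount rotate
  split_ifs <;> omega

lemma chipU_phaseConfig (hpq : p < q) (hqn : q ≤ n) (hhalf : 2 * p ≤ q) {d : ℕ} (hd : d < q) :
    chipU n (phaseConfig n p q d) = phaseConfig n p q (rotate p q d) := by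
  unfold phaseConfig
  rw [chipU_reprIco (by omega) _ (chipR_phaseConfig hpq hqn hhalf hd)]
  funext v
  rw [prevFiringCount_rotate hd]
  apply reprIco_congr
  unfold firingCount rotate
  split_ifs
  · rw [show explicitConfig n p q v + (n - d) + (p + (n - q)) =
      explicitConfig n p q v + (n - (d + (q - p))) + n by omega, Nat.add_mod_right]
  · congr 1
    omega

lemma phaseConfig_zero (hpq : p < q) (hqn : q ≤ n) :
    phaseConfig n p q 0 = explicitConfig n p q := by
  funext v
  have hv := v.isLt
  have hprev : prevFiringCount n p q 0 = p := if_neg (by omega)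
  rw [phaseConfig, hprev, Nat.sub_zero, reprIco_congr (Nat.add_mod_right _ _),
    reprIco_of_le_of_lt (by omega)] <;>
  · unfold explicitConfig
    split_ifs <;> omega

lemma iterate_chipU_explicitConfig (hpq : p < q) (hqn : q ≤ n) (hhalf : 2 * p ≤ q) (t : ℕ) :
    (chipU n)^[t] (explicitConfig n p q) = phaseConfig n p q (phase p q t) := by
  induction t with
  | zero => exact (phaseConfig_zero hpq hqn).symm
  | succ t ih =>
    rw [Function.iterate_succ_apply', ih, chipU_phaseConfig hpq hqn hhalf (phase_lt hpq t),
      phase_succ]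

/-- The phase goes up by `q - p` exactly in the steps where `n - q` vertices fire on top of `p`,
and down by `p` in the others. -/
lemma mul_chipAlpha_explicitConfig (hpq : p < q) (hqn : q ≤ n) (hhalf : 2 * p ≤ q) (t : ℕ) :
    q * chipAlpha n (explicitConfig n p q) t = n * p * t + (n - q) * phase p q t := by
  induction t with
  | zero => simp [chipAlpha, phase]
  | succ t ih =>
    rw [chipAlpha, sum_range_succ, ← chipAlpha, iterate_chipU_explicitConfig hpq hqn hhalf,
      chipR_phaseConfig hpq hqn hhalf (phase_lt hpq t), phase_succ]
    unfold firingCount rotate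
    split_ifs with h
    · zify [hqn, hpq.le] at ih ⊢
      linear_combination ih
    · zify [hqn, hpq.le, not_lt.1 h] at ih ⊢
      linear_combination ih

lemma abs_chipAlpha_explicitConfig_sub_le (hpq : p < q) (hqn : q ≤ n) (hhalf : 2 * p ≤ q)
    (t : ℕ) : |(chipAlpha n (explicitConfig n p q) t : ℝ) - n * p / q * t| ≤ n := by
  have hq : (0 : ℝ) < q := by exact_mod_cast (Nat.zero_lt_of_lt hpq)
  have hmul : (q : ℝ) * chipAlpha n (explicitConfig n p q) t =
      n * p * t + ((n - q : ℕ) : ℝ) * phase p q t := by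
    exact_mod_cast mul_chipAlpha_explicitConfig hpq hqn hhalf t
  have herr : (chipAlpha n (explicitConfig n p q) t : ℝ) - n * p / q * t =
      ((n - q : ℕ) : ℝ) * phase p q t / q := by
    field_simp
    linarith
  have hphase : (phase p q t : ℝ) ≤ q := by exact_mod_cast (phase_lt hpq t).le
  have hnq : ((n - q : ℕ) : ℝ) ≤ n := by exact_mod_cast Nat.sub_le n q
  rw [herr, abs_of_nonneg (by positivity), div_le_iff₀ hq]
  exact mul_le_mul hnq hphase (Nat.cast_nonneg _) (Nat.cast_nonneg _)

end Explicit

lemma tendsto_div_natCast_of_abs_sub_mul_le {f : ℕ → ℝ} {c C : ℝ}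
    (h : ∀ t, |f t - c * t| ≤ C) : Tendsto (fun t : ℕ => f t / t) atTop (𝓝 c) := by
  have herr : Tendsto (fun t : ℕ => (f t - c * t) / t) atTop (𝓝 0) := by
    refine squeeze_zero_norm (fun t => ?_) (tendsto_const_div_atTop_nhds_zero_nat C)
    rw [norm_div, Real.norm_natCast, Real.norm_eq_abs]
    exact div_le_div_of_nonneg_right (h t) (Nat.cast_nonneg t)
  rw [← add_zero c]
  refine (herr.const_add c).congr' ?_
  filter_upwards [eventually_ne_atTop 0] with t ht
  field_simp
  ring

theorem explicit_configuration_activity_general (n p q : ℕ)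
    (hpq : p < q) (hqn : q ≤ n) (hhalf : 2 * p ≤ q) (σ : Fin n → ℕ)
    (hσ : ∀ v : Fin n,
      σ v = if (v : ℕ) + 1 ≤ q - 1 - p then (v : ℕ) + 1 + p - 1
            else if (v : ℕ) + 1 ≤ q - 1 then (v : ℕ) + 1 + n + p - q - 1
            else n + p - 1) :
    Activity n σ ((p : ℝ) / (q : ℝ)) := by
  obtain rfl : σ = explicitConfig n p q := funext hσ
  have hlim := (tendsto_div_natCast_of_abs_sub_mul_le
    (abs_chipAlpha_explicitConfig_sub_le hpq hqn hhalf)).div_const (n : ℝ)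
  have hn0 : (n : ℝ) ≠ 0 := by exact_mod_cast (Nat.zero_lt_of_lt (hpq.trans_le hqn)).ne'
  unfold Activity
  convert hlim using 2 with t
  · rw [div_div, mul_comm]
  · field_simp

theorem explicit_configuration_activity (n p q : ℕ) (hn : 0 < n)
    (hp : 1 ≤ p) (hpq : p < q) (hqn : q ≤ n) (hcop : Nat.Coprime p q)
    (hhalf : 2 * p ≤ q) (σ : Fin n → ℕ)
    (hσ : ∀ v : Fin n,
      σ v = if (v : ℕ) + 1 ≤ q - 1 - p then (v : ℕ) + 1 + p - 1
            else if (v : ℕ) + 1 ≤ q - 1 then (v : ℕ) + 1 + n + p - q - 1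
            else n + p - 1) :
    Activity n σ ((p : ℝ) / (q : ℝ)) :=
  explicit_configuration_activity_general n p q hpq hqn hhalf σ hσ
end

section
/- Let σ be a chip configuration on K_n and define ψ(σ)(x) = (σ(⌈nx⌉) + ⌈nx⌉ - nx)/n for x ∈ [0,1]. Then U(ψ(σ)) = ψ(Uσ), where U on the left is the generalized update and on the right the chip-firing update. -/
/-!
On the interval `((k - 1) / n, k / n]` the configuration `ψ(σ)` equals `σ(k) / n` plus an offset
`(⌈n x⌉ - n x) / n ∈ [0, 1 / n)`. Since `σ(k)` is an integer, the offset never changes whether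
`ψ(σ)(x) ≥ 1`, i.e. whether `σ(k) ≥ n`. So the unstable set of `ψ(σ)` is, up to the null set `{0}`,
the union of the `r(σ)` intervals of length `1 / n` belonging to the unstable vertices, whence
`r(ψ(σ)) = r(σ) / n`, and the two updates agree pointwise.
-/

open MeasureTheory

/-- The fraction of unstable sites of a generalized chip configuration `η : [0,1] → [0,∞)`. -/
noncomputable def genR (η : ℝ → ℝ) : ℝ :=
  (volume {x ∈ Set.Icc (0:ℝ) 1 | 1 ≤ η x}).toReal

/-- The parallel update rule for generalized chip configurations. -/
noncomputable def genU (η : ℝ → ℝ) : ℝ → ℝ :=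
  fun x => η x + genR η - if 1 ≤ η x then 1 else 0

/-- Number of unstable vertices, for a chip configuration indexed by vertices 1,…,n. -/
def chipR' (n : ℕ) (σ : ℕ → ℕ) : ℕ :=
  ((Finset.Icc 1 n).filter (fun v => n ≤ σ v)).card

/-- Parallel chip-firing update on the complete graph K_n, vertices 1,…,n. -/
def chipU' (n : ℕ) (σ : ℕ → ℕ) : ℕ → ℕ :=
  fun v => if n ≤ σ v then σ v + chipR' n σ - n else σ v + chipR' n σ

open Finset

section CeilFibers

variable {n : ℕ} (hn : 0 < n)
include hn

theorem natCeil_mul_eq_iff {k : ℕ} (hk : k ≠ 0) (x : ℝ) :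
    ⌈(n : ℝ) * x⌉₊ = k ↔ x ∈ Set.Ioc (((k : ℝ) - 1) / n) (k / n) := by
  have hn' : (0 : ℝ) < n := by exact_mod_cast hn
  rw [Nat.ceil_eq_iff hk, Nat.cast_pred (Nat.pos_of_ne_zero hk), Set.mem_Ioc,
    div_lt_iff₀ hn', le_div_iff₀ hn', mul_comm x]

theorem volume_natCeil_mul_eq {k : ℕ} (hk : k ≠ 0) :
    volume ((fun x : ℝ => ⌈(n : ℝ) * x⌉₊) ⁻¹' {k}) = ENNReal.ofReal (1 / n) := by
  have hIoc : (fun x : ℝ => ⌈(n : ℝ) * x⌉₊) ⁻¹' {k} = Set.Ioc (((k : ℝ) - 1) / n) (k / n) :=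
    Set.ext (natCeil_mul_eq_iff hn hk)
  rw [hIoc, Real.volume_Ioc]
  congr 1
  ring

theorem natCeil_mul_mem_Icc_iff (x : ℝ) :
    ⌈(n : ℝ) * x⌉₊ ∈ Finset.Icc 1 n ↔ x ∈ Set.Ioc 0 1 := by
  have hn' : (0 : ℝ) < n := by exact_mod_cast hn
  rw [Finset.mem_Icc, Nat.one_le_iff_ne_zero, ← Nat.pos_iff_ne_zero, Nat.ceil_pos, Nat.ceil_le,
    Set.mem_Ioc, mul_pos_iff_of_pos_left hn', mul_le_iff_le_one_right hn']

theorem volume_setOf_natCeil_mul (p : ℕ → Prop) [DecidablePred p] :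
    (volume {x ∈ Set.Icc (0 : ℝ) 1 | p ⌈(n : ℝ) * x⌉₊}).toReal
      = #((Finset.Icc 1 n).filter p) / n := by
  have hfib : {x ∈ Set.Ioc (0 : ℝ) 1 | p ⌈(n : ℝ) * x⌉₊}
      = (fun x : ℝ => ⌈(n : ℝ) * x⌉₊) ⁻¹' ↑((Finset.Icc 1 n).filter p) := by
    ext x
    simp [← natCeil_mul_mem_Icc_iff hn]
  have hae : {x ∈ Set.Icc (0 : ℝ) 1 | p ⌈(n : ℝ) * x⌉₊}
      =ᵐ[volume] {x ∈ Set.Ioc (0 : ℝ) 1 | p ⌈(n : ℝ) * x⌉₊} :=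
    Ioc_ae_eq_Icc.symm.inter (ae_eq_refl {x : ℝ | p ⌈(n : ℝ) * x⌉₊})
  have hmeas : Measurable fun x : ℝ => ⌈(n : ℝ) * x⌉₊ :=
    Nat.measurable_ceil.comp (measurable_const_mul _)
  rw [measure_congr hae, hfib,
    ← sum_measure_preimage_singleton _ fun k _ => hmeas (measurableSet_singleton k)]
  rw [Finset.sum_congr rfl fun k hk => volume_natCeil_mul_eq hn
    (Nat.one_le_iff_ne_zero.mp (Finset.mem_Icc.mp (Finset.mem_of_mem_filter k hk)).1)]
  rw [Finset.sum_const, nsmul_eq_mul, ENNReal.toReal_mul, ENNReal.toReal_natCast,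
    ENNReal.toReal_ofReal (by positivity), mul_one_div]

end CeilFibers

/-- The embedding `ψ` of chip configurations into generalized ones. -/
noncomputable def chipEmbed (n : ℕ) (σ : ℕ → ℕ) (x : ℝ) : ℝ :=
  ((σ ⌈(n : ℝ) * x⌉.toNat : ℝ) + (⌈(n : ℝ) * x⌉ : ℝ) - n * x) / n

section ChipEmbed

variable {n : ℕ} (hn : 0 < n) (σ : ℕ → ℕ)
include hn

theorem one_le_chipEmbed_iff (x : ℝ) : 1 ≤ chipEmbed n σ x ↔ n ≤ σ ⌈(n : ℝ) * x⌉.toNat := by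
  have hn' : (0 : ℝ) < n := by exact_mod_cast hn
  have hceil_ge := Int.le_ceil ((n : ℝ) * x)
  have hceil_lt := Int.ceil_lt_add_one ((n : ℝ) * x)
  rw [chipEmbed, le_div_iff₀ hn', one_mul]
  constructor
  · intro h
    have hlt : (n : ℝ) < σ ⌈(n : ℝ) * x⌉.toNat + 1 := by linarith
    have : n < σ ⌈(n : ℝ) * x⌉.toNat + 1 := by exact_mod_cast hlt
    omega
  · intro h
    have : (n : ℝ) ≤ σ ⌈(n : ℝ) * x⌉.toNat := by exact_mod_cast h
    linarith

theorem genR_chipEmbed : genR (chipEmbed n σ) = chipR' n σ / n := by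
  have hset : {x ∈ Set.Icc (0 : ℝ) 1 | 1 ≤ chipEmbed n σ x}
      = {x ∈ Set.Icc (0 : ℝ) 1 | n ≤ σ ⌈(n : ℝ) * x⌉₊} := by
    ext x
    simp only [Set.mem_ofPred_eq, one_le_chipEmbed_iff hn, Int.ceil_toNat]
  rw [genR, hset, volume_setOf_natCeil_mul hn (fun k => n ≤ σ k), chipR']

omit hn in
theorem cast_chipU' (v : ℕ) :
    (chipU' n σ v : ℝ) = σ v + chipR' n σ - if n ≤ σ v then (n : ℝ) else 0 := by
  unfold chipU'
  split_ifs with h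
  · rw [Nat.cast_sub (h.trans (Nat.le_add_right _ _))]
    push_cast
    ring
  · push_cast
    ring

theorem genU_chipEmbed : genU (chipEmbed n σ) = chipEmbed n (chipU' n σ) := by
  have hn' : (n : ℝ) ≠ 0 := by exact_mod_cast hn.ne'
  funext x
  simp only [genU, genR_chipEmbed hn, one_le_chipEmbed_iff hn]
  rw [chipEmbed, chipEmbed, cast_chipU']
  split_ifs <;> field_simp <;> ring

end ChipEmbed

theorem update_commutes_with_embedding (n : ℕ) (hn : 0 < n) (σ : ℕ → ℕ)
    (ψ : (ℕ → ℕ) → ℝ → ℝ)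
    (hψ : ∀ (τ : ℕ → ℕ) (x : ℝ),
      ψ τ x = ((τ (⌈(n : ℝ) * x⌉.toNat) : ℝ) + (⌈(n : ℝ) * x⌉ : ℝ) - n * x) / n) :
    ∀ x ∈ Set.Icc (0:ℝ) 1, genU (ψ σ) x = ψ (chipU' n σ) x := by
  have hψ_eq : ψ = chipEmbed n := funext fun τ => funext (hψ τ)
  intro x _
  rw [hψ_eq, genU_chipEmbed hn]
end

section
/- Let μ be a non-atomic Borel probability measure on [0,2) and define φ(μ)(y) = μ[1,2) + Σ_{m∈ℤ} μ(m-y, m] for y ∈ ℝ (with the convention μ(a,b] := -μ[b,a) when b < a). Then φ(μ) is a continuous nondecreasing function ℝ → ℝ satisfying φ(μ)(y+1) = φ(μ)(y) + 1 for all y. -/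
/-!
Let `F` be the CDF of `μ`; it is continuous because `μ` has no atoms, and then
`μ(m - y, m] = F m - F (m - y)` for both signs of `y`, so
`φ(μ)(y) = μ[1,2) + ∑ₘ (F m - F (m - y))`.
As `F = 0` on `(-∞, -1]` and `F = 1` on `[2, ∞)`, for `y` in a bounded set only finitely many
terms are nonzero, which gives continuity, and each term is nondecreasing in `y`. For the
translation, `F m - F (m - y - 1) = (F m - F (m - 1)) + (F (m - 1) - F (m - 1 - y))`: the first
part telescopes over `ℤ` to `1`, the second is the series at `y` reindexed.
-/

open MeasureTheory

/-- Signed interval measure `μ(a,b]`, with the convention `μ(a,b] = -μ[b,a)` when `b < a`. -/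
noncomputable def sIoc (μ : Measure ℝ) (a b : ℝ) : ℝ :=
  if a ≤ b then (μ (Set.Ioc a b)).toReal else -((μ (Set.Ico b a)).toReal)

/-- The lift of the circle map associated to a measure `μ` on `[0,2)`:
`φ(μ)(y) = μ[1,2) + ∑_{m ∈ ℤ} μ(m-y, m]`. -/
noncomputable def phiMap (μ : Measure ℝ) : ℝ → ℝ :=
  fun y => (μ (Set.Ico (1:ℝ) 2)).toReal + ∑' m : ℤ, sIoc μ ((m : ℝ) - y) (m : ℝ)

open ProbabilityTheory Set Topology

theorem Int.sum_Ioc_sub_sub_one {G : Type*} [AddCommGroup G] (g : ℤ → G) {M N : ℤ} (h : M ≤ N) :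
    ∑ m ∈ Finset.Ioc M N, (g m - g (m - 1)) = g N - g M := by
  induction N, h using Int.leInduction with
  | base => simp
  | succ N hMN ih =>
    rw [← Finset.insert_Ioc_right_eq_Ioc_add_one hMN, Finset.sum_insert (by simp), ih,
      add_sub_cancel_right, sub_add_sub_cancel]

theorem Int.hasSum_sub_sub_one {G : Type*} [AddCommGroup G] [TopologicalSpace G] {g : ℤ → G}
    {M N : ℤ} {c₀ c₁ : G} (hM : ∀ m ≤ M, g m = c₀) (hN : ∀ m ≥ N, g m = c₁) :
    HasSum (fun m => g m - g (m - 1)) (c₁ - c₀) := by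
  have hsum := Int.sum_Ioc_sub_sub_one g (le_max_left M N)
  rw [hM M le_rfl, hN _ (le_max_right M N)] at hsum
  rw [← hsum]
  refine hasSum_sum_of_ne_finset_zero fun m hm => ?_
  rw [Finset.mem_Ioc, not_and_or, not_lt, not_le] at hm
  rcases hm with hm | hm
  · rw [hM m hm, hM (m - 1) (by omega), sub_self]
  · rw [hN m (by omega), hN (m - 1) (by omega), sub_self]

/-- For the CDF `F` of `μ` the summand is `μ(m - y, m]`, so this is the series in `phiMap μ`. -/
noncomputable def cdfLift (F : ℝ → ℝ) (y : ℝ) : ℝ := ∑' m : ℤ, (F m - F (m - y))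

section cdfLift

variable {F : ℝ → ℝ} {a b c₀ c₁ : ℝ}

theorem cdfLift_term_eq_zero (h₀ : ∀ t ≤ a, F t = c₀) (h₁ : ∀ t ≥ b, F t = c₁) {R y : ℝ}
    (hy : y ∈ Icc (-R) R) {m : ℤ} (hm : m ∉ Finset.Ioo ⌊a - R⌋ ⌈b + R⌉) :
    F m - F (m - y) = 0 := by
  obtain ⟨hRy, hyR⟩ := hy
  rw [Finset.mem_Ioo, not_and_or, not_lt, not_lt] at hm
  rcases hm with hm | hm
  · have : (m : ℝ) ≤ a - R := Int.le_floor.1 hm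
    rw [h₀ m (by linarith), h₀ _ (by linarith), sub_self]
  · have : b + R ≤ m := Int.ceil_le.1 hm
    rw [h₁ m (by linarith), h₁ _ (by linarith), sub_self]

theorem cdfLift_eqOn_sum (h₀ : ∀ t ≤ a, F t = c₀) (h₁ : ∀ t ≥ b, F t = c₁) (R : ℝ) :
    EqOn (cdfLift F) (fun y => ∑ m ∈ Finset.Ioo ⌊a - R⌋ ⌈b + R⌉, (F m - F (m - y)))
      (Icc (-R) R) :=
  fun _ hy => tsum_eq_sum fun _ hm => cdfLift_term_eq_zero h₀ h₁ hy hm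

theorem summable_cdfLift (h₀ : ∀ t ≤ a, F t = c₀) (h₁ : ∀ t ≥ b, F t = c₁) (y : ℝ) :
    Summable fun m : ℤ => F m - F (m - y) :=
  summable_of_ne_finset_zero fun _ hm =>
    cdfLift_term_eq_zero h₀ h₁ (R := |y|) ⟨neg_abs_le y, le_abs_self y⟩ hm

theorem continuous_cdfLift (hF : Continuous F) (h₀ : ∀ t ≤ a, F t = c₀)
    (h₁ : ∀ t ≥ b, F t = c₁) : Continuous (cdfLift F) := by
  refine continuous_iff_continuousAt.2 fun x => ?_
  have hx : Icc (-(|x| + 1)) (|x| + 1) ∈ 𝓝 x :=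
    Icc_mem_nhds (by linarith [neg_abs_le x]) (by linarith [le_abs_self x])
  refine ContinuousAt.congr ?_ ((cdfLift_eqOn_sum h₀ h₁ _).eventuallyEq_of_mem hx).symm
  fun_prop

theorem monotone_cdfLift (hF : Monotone F) (h₀ : ∀ t ≤ a, F t = c₀)
    (h₁ : ∀ t ≥ b, F t = c₁) : Monotone (cdfLift F) := fun y z hyz =>
  (summable_cdfLift h₀ h₁ y).tsum_mono (summable_cdfLift h₀ h₁ z) fun m => by
    have := hF (show (m : ℝ) - z ≤ m - y by linarith)
    dsimp only
    linarith

theorem cdfLift_add_one (h₀ : ∀ t ≤ a, F t = c₀) (h₁ : ∀ t ≥ b, F t = c₁) (y : ℝ) :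
    cdfLift F (y + 1) = cdfLift F y + (c₁ - c₀) := by
  have htel : HasSum (fun m : ℤ => F m - F ((m - 1 : ℤ) : ℝ)) (c₁ - c₀) :=
    Int.hasSum_sub_sub_one (g := fun m : ℤ => F m) (M := ⌊a⌋) (N := ⌈b⌉)
      (fun m hm => h₀ m ((Int.cast_le.2 hm).trans (Int.floor_le a)))
      (fun m hm => h₁ m ((Int.le_ceil b).trans (Int.cast_le.2 hm)))
  have hshift := (Equiv.subRight (1 : ℤ)).hasSum_iff.2 (summable_cdfLift h₀ h₁ y).hasSum
  rw [add_comm (cdfLift F y)]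
  convert (htel.add hshift).tsum_eq using 1
  · refine tsum_congr fun m => ?_
    simp only [Function.comp_apply, Equiv.subRight_apply, Int.cast_sub, Int.cast_one]
    ring_nf
  · rfl

end cdfLift

theorem StieltjesFunction.continuous_of_measure_singleton (f : StieltjesFunction ℝ)
    (h : ∀ x, f.measure {x} = 0) : Continuous f := by
  refine continuous_iff_continuousAt.2 fun x => continuousAt_iff_continuous_left_right.2
    ⟨?_, f.right_continuous x⟩
  rw [← continuousWithinAt_Iio_iff_Iic, f.mono.continuousWithinAt_Iio_iff_leftLim_eq]
  have hjump := f.measure_singleton x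
  rw [h, eq_comm, ENNReal.ofReal_eq_zero, sub_nonpos] at hjump
  exact le_antisymm (f.mono.leftLim_le le_rfl) hjump

namespace ProbabilityTheory

variable {μ : Measure ℝ} [IsProbabilityMeasure μ]

theorem continuous_cdf [NullSingletonClass μ] : Continuous (cdf μ) :=
  (cdf μ).continuous_of_measure_singleton fun x => by rw [measure_cdf]; exact measure_singleton x

theorem cdf_eq_zero_of_disjoint {s : Set ℝ} (hs : μ sᶜ = 0) {t : ℝ} (h : Disjoint (Iic t) s) :
    cdf μ t = 0 := by
  rw [cdf_eq_real, measureReal_def, measure_mono_null h.subset_compl_right hs,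
    ENNReal.toReal_zero]

theorem cdf_eq_one_of_subset {s : Set ℝ} (hs : μ sᶜ = 0) {t : ℝ} (h : s ⊆ Iic t) :
    cdf μ t = 1 := by
  rw [cdf_eq_real, measureReal_def,
    (prob_compl_eq_zero_iff measurableSet_Iic).1 (measure_mono_null (compl_subset_compl.2 h) hs),
    ENNReal.toReal_one]

theorem measure_Ioc_toReal_eq_cdf_sub {a b : ℝ} (hab : a ≤ b) :
    (μ (Ioc a b)).toReal = cdf μ b - cdf μ a := by
  have h := (cdf μ).measure_Ioc a b
  rw [measure_cdf] at h
  rw [h, ENNReal.toReal_ofReal (sub_nonneg.2 (monotone_cdf μ hab))]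

theorem sIoc_eq_cdf_sub [NullSingletonClass μ] (a b : ℝ) : sIoc μ a b = cdf μ b - cdf μ a := by
  unfold sIoc
  split_ifs with hab
  · exact measure_Ioc_toReal_eq_cdf_sub hab
  · rw [measure_congr Ico_ae_eq_Ioc, measure_Ioc_toReal_eq_cdf_sub (le_of_not_ge hab), neg_sub]

end ProbabilityTheory

theorem phiMap_eq_cdfLift {μ : Measure ℝ} [IsProbabilityMeasure μ] [NullSingletonClass μ] :
    phiMap μ = fun y => (μ (Ico 1 2)).toReal + cdfLift (cdf μ) y := by
  ext y
  simp only [phiMap, cdfLift, sIoc_eq_cdf_sub]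

theorem phiMap_is_degree_one_lift (μ : Measure ℝ) [IsProbabilityMeasure μ]
    (hsupp : μ (Set.Ico (0:ℝ) 2)ᶜ = 0) (hatom : ∀ y : ℝ, μ {y} = 0) :
    Continuous (phiMap μ) ∧ Monotone (phiMap μ) ∧
      ∀ y : ℝ, phiMap μ (y + 1) = phiMap μ y + 1 := by
  have : NullSingletonClass μ := ⟨hatom⟩
  have h₀ : ∀ t ≤ -1, cdf μ t = 0 := fun t ht =>
    cdf_eq_zero_of_disjoint hsupp
      ((Iic_disjoint_Ici.2 (by linarith)).mono_right Ico_subset_Ici_self)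
  have h₁ : ∀ t ≥ 2, cdf μ t = 1 := fun t ht =>
    cdf_eq_one_of_subset hsupp fun x hx => hx.2.le.trans ht
  rw [phiMap_eq_cdfLift]
  refine ⟨continuous_const.add (continuous_cdfLift continuous_cdf h₀ h₁),
    monotone_const.add (monotone_cdfLift (monotone_cdf μ) h₀ h₁), fun y => ?_⟩
  dsimp only
  rw [cdfLift_add_one h₀ h₁, sub_zero, add_assoc]
end

section
/- Let η : [0,1] → [0,∞) be measurable and preconfined (η(x) < 2 for all x), and let β_t = Σ_{s=0}^{t-1} r(U^s η). Define ν(A) = Σ_{m∈ℤ} Leb{x : m - η(x) ∈ A} and f(y) = β_1 + ν(0,y] for y ≥ 0. Then β_{t+1} = f(β_t) for all t ≥ 0; in particular β_t = f^t(0). -/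
open MeasureTheory

/-- The measure ν(0,y] = ∑_{m ∈ ℤ} Leb{x ∈ [0,1] : m - η(x) ∈ (0,y]}. -/
noncomputable def genNu (η : ℝ → ℝ) (y : ℝ) : ℝ :=
  ∑' m : ℤ, (volume {x ∈ Set.Icc (0:ℝ) 1 | (m : ℝ) - η x ∈ Set.Ioc 0 y}).toReal

/-!
Write `β_s` for the mass every site has received before time `s`. A site with `0 ≤ η(x) < 2`
holds `η(x) + β_{s+1} - ⌊η(x) + β_s⌋` after `s + 1` updates, so it topples at time `s + 1`
exactly when `⌊η(x) + β_s⌋ < ⌊η(x) + β_{s+1}⌋`; as each `r ≤ 1`, the floor moves by at most one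
per step. Hence the site topples `⌊η(x) + β_t⌋ - ⌊η(x)⌋ = #{m ∈ ℤ : m - η(x) ∈ (0, β_t]}` times
at times `1, …, t`, and integrating over `x` gives `β_{t+1} - β_1 = ν(0, β_t]`.
-/

open Finset
open scoped ENNReal

lemma floor_sub_floor_eq_ite {y z : ℝ} (h : y ≤ z) (h1 : z ≤ y + 1) :
    ⌊z⌋ - ⌊y⌋ = if ⌊y⌋ < ⌊z⌋ then 1 else 0 := by
  have hle : ⌊y⌋ ≤ ⌊z⌋ := Int.floor_mono h
  have hle1 : ⌊z⌋ ≤ ⌊y⌋ + 1 := by simpa using Int.floor_mono h1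
  split_ifs <;> omega

lemma one_le_sub_floor_iff {y z : ℝ} : 1 ≤ z - ⌊y⌋ ↔ ⌊y⌋ < ⌊z⌋ := by
  rw [Int.lt_iff_add_one_le, Int.le_floor]
  push_cast
  constructor <;> intro h <;> linarith

lemma sub_mem_Ioc_iff_mem_Ioc_floor {m : ℤ} {y c d : ℝ} :
    (m : ℝ) - y ∈ Set.Ioc c d ↔ m ∈ Finset.Ioc ⌊y + c⌋ ⌊y + d⌋ := by
  simp only [Set.mem_Ioc, Finset.mem_Ioc, Int.floor_lt, Int.le_floor]
  constructor <;> rintro ⟨h₁, h₂⟩ <;> constructor <;> linarith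

lemma card_filter_floor_lt_floor {g : ℕ → ℝ} (hg : ∀ s, g s ≤ g (s + 1) ∧ g (s + 1) ≤ g s + 1)
    (t : ℕ) :
    #{s ∈ range t | ⌊g s⌋ < ⌊g (s + 1)⌋} = #(Finset.Ioc ⌊g 0⌋ ⌊g t⌋) := by
  rw [card_filter, Int.card_Ioc]
  induction t with
  | zero => simp
  | succ t ih =>
    have hstep := floor_sub_floor_eq_ite (hg t).1 (hg t).2
    have hmono : ⌊g 0⌋ ≤ ⌊g t⌋ :=
      Int.floor_mono (monotone_nat_of_le_succ (fun s => (hg s).1) (Nat.zero_le t))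
    rw [sum_range_succ, ih]
    split_ifs at hstep ⊢ <;> omega

theorem sum_measure_floor_lt_floor {α : Type*} [MeasurableSpace α] (μ : Measure α)
    {φ : α → ℝ} (hφ : Measurable φ) {b : ℕ → ℝ}
    (hb : ∀ s, b s ≤ b (s + 1) ∧ b (s + 1) ≤ b s + 1) (t : ℕ) :
    ∑ s ∈ range t, μ {x | ⌊φ x + b s⌋ < ⌊φ x + b (s + 1)⌋} =
      ∑' m : ℤ, μ {x | (m : ℝ) - φ x ∈ Set.Ioc (b 0) (b t)} := by
  have hA : ∀ s, MeasurableSet {x | ⌊φ x + b s⌋ < ⌊φ x + b (s + 1)⌋} := fun s =>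
    measurableSet_lt (hφ.add_const _).floor (hφ.add_const _).floor
  have hB : ∀ m : ℤ, MeasurableSet {x | (m : ℝ) - φ x ∈ Set.Ioc (b 0) (b t)} := fun m =>
    (measurable_const.sub hφ) measurableSet_Ioc
  have hcount : ∀ x,
      ∑ s ∈ range t, {x | ⌊φ x + b s⌋ < ⌊φ x + b (s + 1)⌋}.indicator (1 : α → ℝ≥0∞) x =
        ∑' m : ℤ, {x | (m : ℝ) - φ x ∈ Set.Ioc (b 0) (b t)}.indicator 1 x := by
    intro x
    have hg : ∀ s, φ x + b s ≤ φ x + b (s + 1) ∧ φ x + b (s + 1) ≤ φ x + b s + 1 := fun s =>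
      ⟨by linarith [(hb s).1], by linarith [(hb s).2]⟩
    simp only [Set.indicator_apply, Set.mem_ofPred_eq, Pi.one_apply,
      sub_mem_Ioc_iff_mem_Ioc_floor]
    rw [tsum_eq_sum (s := Finset.Ioc _ _) (fun m hm => if_neg hm), sum_boole, sum_boole,
      filter_mem_eq_inter, inter_self, card_filter_floor_lt_floor hg]
  calc ∑ s ∈ range t, μ {x | ⌊φ x + b s⌋ < ⌊φ x + b (s + 1)⌋}
      = ∫⁻ x, ∑ s ∈ range t, {x | ⌊φ x + b s⌋ < ⌊φ x + b (s + 1)⌋}.indicator 1 x ∂μ := by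
        rw [lintegral_finsetSum _ fun s _ => measurable_one.indicator (hA s)]
        simp only [lintegral_indicator_one (hA _)]
    _ = ∑' m : ℤ, ∫⁻ x, {x | (m : ℝ) - φ x ∈ Set.Ioc (b 0) (b t)}.indicator 1 x ∂μ := by
        rw [lintegral_congr hcount,
          lintegral_tsum fun m => (measurable_one.indicator (hB m)).aemeasurable]
    _ = ∑' m : ℤ, μ {x | (m : ℝ) - φ x ∈ Set.Ioc (b 0) (b t)} := by
        simp only [lintegral_indicator_one (hB _)]

/-- A single site receiving mass `B (s + 1) - B s ∈ [0, 1]` at step `s` and toppling (losing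
one unit) whenever it holds at least one: after `s + 1` steps it has toppled `⌊a + B s⌋` times. -/
lemma toppling_trajectory {a : ℝ} (ha₀ : 0 ≤ a) (ha₂ : a < 2) {B v : ℕ → ℝ} (hB₀ : B 0 = 0)
    (hB : ∀ s, B s ≤ B (s + 1) ∧ B (s + 1) ≤ B s + 1) (hv₀ : v 0 = a)
    (hv : ∀ s, v (s + 1) = v s + (B (s + 1) - B s) - if 1 ≤ v s then 1 else 0) (s : ℕ) :
    v (s + 1) = a + B (s + 1) - ⌊a + B s⌋ := by
  induction s with
  | zero =>
    have hfloor : ((⌊a⌋ : ℤ) : ℝ) = if 1 ≤ a then 1 else 0 := by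
      split_ifs with h
      · exact_mod_cast Int.floor_eq_iff.2 ⟨by exact_mod_cast h, by push_cast; linarith⟩
      · exact_mod_cast Int.floor_eq_iff.2 ⟨by exact_mod_cast ha₀, by push_cast; linarith⟩
    rw [hv, hv₀, hB₀, add_zero, hfloor]
    ring
  | succ s ih =>
    have hjump : (⌊a + B (s + 1)⌋ : ℝ) =
        ⌊a + B s⌋ + if ⌊a + B s⌋ < ⌊a + B (s + 1)⌋ then 1 else 0 := by
      exact_mod_cast sub_eq_iff_eq_add'.1 <|
        floor_sub_floor_eq_ite (by linarith [(hB s).1]) (by linarith [(hB s).2])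
    have htop : (1 ≤ v (s + 1)) ↔ ⌊a + B s⌋ < ⌊a + B (s + 1)⌋ := by
      rw [ih]
      exact one_le_sub_floor_iff
    rw [hv, if_congr htop rfl rfl, ih, hjump]
    ring

/-- The total mass `β_t` added to every site during the first `t` updates. -/
noncomputable def genBeta (η : ℝ → ℝ) (t : ℕ) : ℝ :=
  ∑ s ∈ range t, genR (genU^[s] η)

lemma volume_sep_Icc_eq_restrict (p : ℝ → Prop) :
    volume {x ∈ Set.Icc (0:ℝ) 1 | p x} = volume.restrict (Set.Icc (0:ℝ) 1) {x | p x} := by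
  rw [Measure.restrict_apply' measurableSet_Icc, Set.inter_comm]
  rfl

lemma genR_nonneg (η : ℝ → ℝ) : 0 ≤ genR η := ENNReal.toReal_nonneg

lemma genR_le_one (η : ℝ → ℝ) : genR η ≤ 1 := by
  rw [genR, volume_sep_Icc_eq_restrict]
  refine ENNReal.toReal_le_of_le_ofReal zero_le_one ?_
  calc _ ≤ volume.restrict (Set.Icc (0:ℝ) 1) Set.univ := measure_mono (Set.subset_univ _)
    _ = ENNReal.ofReal 1 := by simp [Real.volume_Icc]

section genBeta

variable {η : ℝ → ℝ}

lemma genBeta_zero : genBeta η 0 = 0 := sum_range_zero _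

lemma genBeta_succ (t : ℕ) : genBeta η (t + 1) = genBeta η t + genR (genU^[t] η) :=
  sum_range_succ _ _

lemma genBeta_nonneg (t : ℕ) : 0 ≤ genBeta η t := sum_nonneg fun _ _ => genR_nonneg _

lemma genBeta_le_succ (t : ℕ) :
    genBeta η t ≤ genBeta η (t + 1) ∧ genBeta η (t + 1) ≤ genBeta η t + 1 := by
  rw [genBeta_succ]
  exact ⟨by linarith [genR_nonneg (genU^[t] η)], by linarith [genR_le_one (genU^[t] η)]⟩

lemma one_le_iterate_genU_succ_iff {x : ℝ} (hx : 0 ≤ η x ∧ η x < 2) (s : ℕ) :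
    1 ≤ genU^[s + 1] η x ↔ ⌊η x + genBeta η s⌋ < ⌊η x + genBeta η (s + 1)⌋ := by
  rw [toppling_trajectory hx.1 hx.2 genBeta_zero genBeta_le_succ
    (v := fun s => genU^[s] η x) rfl
    (fun s => by rw [genBeta_succ, Function.iterate_succ_apply']; simp only [genU]; ring) s]
  exact one_le_sub_floor_iff

theorem genBeta_succ_eq (hmeas : Measurable η)
    (hpre : ∀ x ∈ Set.Icc (0:ℝ) 1, 0 ≤ η x ∧ η x < 2) (t : ℕ) :
    genBeta η (t + 1) = genBeta η 1 + genNu η (genBeta η t) := by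
  set μ := volume.restrict (Set.Icc (0:ℝ) 1)
  have htopple : ∀ s, genR (genU^[s + 1] η) =
      (μ {x | ⌊η x + genBeta η s⌋ < ⌊η x + genBeta η (s + 1)⌋}).toReal := by
    intro s
    rw [genR, ← volume_sep_Icc_eq_restrict]
    congr 2
    exact Set.sep_ext_iff.2 fun x hx => one_le_iterate_genU_succ_iff (hpre x hx) s
  have hcount := sum_measure_floor_lt_floor μ hmeas (genBeta_le_succ (η := η)) t
  rw [genBeta_zero] at hcount
  calc genBeta η (t + 1) = genBeta η 1 + ∑ s ∈ range t, genR (genU^[s + 1] η) := by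
        rw [genBeta, sum_range_succ', genBeta, sum_range_one, add_comm]
    _ = genBeta η 1 + (∑ s ∈ range t,
          μ {x | ⌊η x + genBeta η s⌋ < ⌊η x + genBeta η (s + 1)⌋}).toReal := by
        rw [ENNReal.toReal_sum fun s _ => measure_ne_top _ _]
        simp only [htopple]
    _ = genBeta η 1 + genNu η (genBeta η t) := by
        rw [hcount, ENNReal.tsum_toReal_eq fun m => measure_ne_top _ _, genNu]
        simp only [volume_sep_Icc_eq_restrict]
        rfl

end genBeta

theorem beta_recurrence (η : ℝ → ℝ) (hmeas : Measurable η)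
    (hpre : ∀ x ∈ Set.Icc (0:ℝ) 1, 0 ≤ η x ∧ η x < 2)
    (β : ℕ → ℝ) (hβ : ∀ t, β t = ∑ s ∈ Finset.range t, genR (genU^[s] η))
    (f : ℝ → ℝ) (hf : ∀ y : ℝ, 0 ≤ y → f y = β 1 + genNu η y) :
    ∀ t : ℕ, β (t + 1) = f (β t) ∧ β t = f^[t] 0 := by
  obtain rfl : β = genBeta η := funext hβ
  have hstep : ∀ t, f (genBeta η t) = genBeta η (t + 1) := fun t =>
    (hf _ (genBeta_nonneg t)).trans (genBeta_succ_eq hmeas hpre t).symm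
  intro t
  refine ⟨(hstep t).symm, ?_⟩
  induction t with
  | zero => exact genBeta_zero
  | succ t ih => rw [Function.iterate_succ_apply', ← ih, hstep]
end
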